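/- Let f : (0,∞) → C be continuous with asymptotic expansion f(t) ~ Σ_{j≥0} A_{−l+j} t^{−l+j} as t → 0+ (l ∈ {0, 1/2}) and exponential decay at ∞. Then ζ(s) = −(1/Γ(s)) ∫_0^∞ t^{s−1} f(t) dt extends meromorphically with s = 0 regular, and ζ'(0) = −∫_0^1 (f(t) − A_{−l} t^{−l}) dt/t − ∫_1^∞ f(t) dt/t + C', where C' = A_0 Γ'(1) if l = 0 (interpreting A_{−l} t^{−l} = A_0 and the subtraction accordingly), and C' = 2 A_{−1/2} if l = 1/2. -/

import Mathlib

/-!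
Subtracting from `f` on `(0, 1]` the first `J` terms of its expansion at `0` leaves a remainder
`R_J = O(t^(J - l))`, whose Mellin transform is holomorphic on `Re s > l - J`, while the subtracted
terms have Mellin transform `∑_{j<J} A_j / (s - l + j)`. So
`-Γ(s)⁻¹ (𝓜 R_J (s) + ∑_{j<J} A_j / (s - l + j))` continues `ζ` to `Re s > l - J`, consistently
in `J`. At `s = 0` take `J = 1` and write `Γ(s)⁻¹ = s Γ(s + 1)⁻¹`: for `l = 0` the factor `s`
cancels the pole of `A₀ / s`, leaving `-A₀ Γ(s + 1)⁻¹`, whose derivative `A₀ Γ'(1)` is the extra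
term; for `l = 1/2` the term `s A₀ / (s - 1/2)` vanishes at `0` with derivative `-2 A₀`.
-/

open MeasureTheory Asymptotics Filter Set Topology

namespace MellinZeta

noncomputable section

local notation "γ" => Real.eulerMascheroniConstant

def expansionSum (l : ℝ) (A : ℕ → ℂ) (J : ℕ) (t : ℝ) : ℂ :=
  ∑ j ∈ Finset.range J, A j * ((t ^ (-l + j) : ℝ) : ℂ)

structure IsAdmissible (f : ℝ → ℂ) (l : ℝ) (A : ℕ → ℂ) : Prop where
  locallyIntegrableOn : LocallyIntegrableOn f (Ioi 0)
  exists_isBigO_exp : ∃ a > 0, f =O[atTop] fun t => Real.exp (-a * t)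
  isBigO_expansion :
    ∀ J : ℕ, (fun t => f t - expansionSum l A J t) =O[𝓝[>] 0] fun t => t ^ (-l + J)

def remainder (f : ℝ → ℂ) (l : ℝ) (A : ℕ → ℂ) (J : ℕ) : ℝ → ℂ :=
  f - (Ioc 0 1).indicator (expansionSum l A J)

/-- `-Γ(s)⁻¹ (𝓜 R_J (s) + ∑_{j<J} A_j / (s - c_j))` with `c_j = l - j`, rewritten through
`Γ(s)⁻¹ = s Γ(s + 1)⁻¹` and `s / (s - c) = 1 + c / (s - c)`; the latter form is analytic at
`s = 0` also when `c = 0`. -/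
def truncatedZeta (f : ℝ → ℂ) (l : ℝ) (A : ℕ → ℂ) (J : ℕ) (s : ℂ) : ℂ :=
  -((Complex.Gamma (s + 1))⁻¹ * (s * mellin (remainder f l A J) s
    + ∑ j ∈ Finset.range J, A j * (1 + ((l : ℂ) - j) / (s - ((l : ℂ) - j)))))

def regularizedZeta (f : ℝ → ℂ) (l : ℝ) (A : ℕ → ℂ) (s : ℂ) : ℂ :=
  truncatedZeta f l A (⌊l - s.re⌋₊ + 1) s

lemma analyticAt_inv_Gamma_add_one (s : ℂ) :
    AnalyticAt ℂ (fun s : ℂ => (Complex.Gamma (s + 1))⁻¹) s :=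
  (Complex.differentiable_one_div_Gamma.comp (differentiable_id.add_const 1)).analyticAt s

lemma hasDerivAt_inv_Gamma_add_one_zero :
    HasDerivAt (fun s : ℂ => (Complex.Gamma (s + 1))⁻¹) γ 0 := by
  have hΓ : HasDerivAt (fun s : ℂ => Complex.Gamma (s + 1)) (-γ) 0 := by
    have h1 : HasDerivAt Complex.Gamma (-γ) (0 + 1) := by
      simpa using Complex.hasDerivAt_Gamma_one
    simpa using h1.comp_add_const 0 1
  simpa using hΓ.fun_inv (by simp)

lemma analyticAt_div_sub_self_zero (c : ℂ) : AnalyticAt ℂ (fun s => c / (s - c)) 0 := by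
  rcases eq_or_ne c 0 with rfl | hc
  · simpa using analyticAt_const (v := (0 : ℂ))
  · exact analyticAt_const.div (analyticAt_id.sub analyticAt_const) (by simpa using hc)

lemma hasDerivAt_div_sub_self_zero (c : ℂ) : HasDerivAt (fun s => c / (s - c)) (-c⁻¹) 0 := by
  rcases eq_or_ne c 0 with rfl | hc
  · simpa using hasDerivAt_const (0 : ℂ) (0 : ℂ)
  · refine ((hasDerivAt_const (0 : ℂ) c).div ((hasDerivAt_id' 0).sub_const c)
      (by simpa using hc)).congr_deriv ?_
    field_simp
    ring

variable {f : ℝ → ℂ} {l : ℝ} {A : ℕ → ℂ}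

lemma remainder_zero : remainder f l A 0 = f := by
  ext t
  simp [remainder, expansionSum]

lemma remainder_succ (J : ℕ) :
    remainder f l A (J + 1) = fun t => remainder f l A J t
      - A J • (Ioc 0 1).indicator (fun t : ℝ => (t : ℂ) ^ ((-l + J : ℝ) : ℂ)) t := by
  ext t
  by_cases ht : t ∈ Ioc (0 : ℝ) 1
  · simp only [remainder, Pi.sub_apply, indicator_of_mem ht, expansionSum,
      Finset.sum_range_succ, smul_eq_mul, ← Complex.ofReal_cpow ht.1.le]
    ring
  · simp [remainder, indicator_of_notMem ht]

lemma remainder_eventuallyEq_nhdsGT (J : ℕ) :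
    remainder f l A J =ᶠ[𝓝[>] 0] fun t => f t - expansionSum l A J t := by
  filter_upwards [Ioc_mem_nhdsGT zero_lt_one] with t ht
  simp [remainder, indicator_of_mem ht]

lemma remainder_eventuallyEq_atTop (J : ℕ) : remainder f l A J =ᶠ[atTop] f := by
  filter_upwards [eventually_gt_atTop 1] with t ht
  simp [remainder, indicator_of_notMem (fun h : t ∈ Ioc 0 1 => h.2.not_gt ht)]

namespace IsAdmissible

lemma locallyIntegrableOn_remainder (hf : IsAdmissible f l A) (J : ℕ) :
    LocallyIntegrableOn (remainder f l A J) (Ioi 0) := by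
  refine hf.locallyIntegrableOn.sub fun x hx => ?_
  have hsum : ContinuousOn (expansionSum l A J) (Ioi 0) := by
    refine continuousOn_finsetSum _ fun j _ => continuousOn_const.mul ?_
    exact Complex.continuous_ofReal.comp_continuousOn
      (continuousOn_id.rpow_const fun t ht => Or.inl (ne_of_gt ht))
  obtain ⟨U, hU, hint⟩ := hsum.locallyIntegrableOn (μ := volume) measurableSet_Ioi x hx
  exact ⟨U, hU, hint.indicator measurableSet_Ioc⟩

lemma remainder_isBigO_nhdsGT (hf : IsAdmissible f l A) (J : ℕ) :
    remainder f l A J =O[𝓝[>] 0] (· ^ (-(l - J))) := by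
  simpa only [neg_sub, neg_add_eq_sub] using
    (remainder_eventuallyEq_nhdsGT J).trans_isBigO (hf.isBigO_expansion J)

lemma remainder_isBigO_exp (hf : IsAdmissible f l A) (J : ℕ) :
    ∃ a > 0, remainder f l A J =O[atTop] fun t => Real.exp (-a * t) := by
  obtain ⟨a, ha, hfa⟩ := hf.exists_isBigO_exp
  exact ⟨a, ha, (remainder_eventuallyEq_atTop J).trans_isBigO hfa⟩

lemma mellinConvergent_remainder (hf : IsAdmissible f l A) {J : ℕ} {s : ℂ}
    (hs : l - J < s.re) : MellinConvergent (remainder f l A J) s :=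
  have ⟨_, ha, htop⟩ := hf.remainder_isBigO_exp J
  mellinConvergent_of_isBigO_rpow_exp ha (hf.locallyIntegrableOn_remainder J) htop
    (hf.remainder_isBigO_nhdsGT J) hs

lemma analyticAt_mellin_remainder (hf : IsAdmissible f l A) {J : ℕ} {s : ℂ}
    (hs : l - J < s.re) : AnalyticAt ℂ (mellin (remainder f l A J)) s := by
  obtain ⟨_, ha, htop⟩ := hf.remainder_isBigO_exp J
  refine DifferentiableOn.analyticAt (s := {s : ℂ | l - J < s.re}) (fun s hs => ?_)
    ((isOpen_lt continuous_const Complex.continuous_re).mem_nhds hs)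
  exact (mellin_differentiableAt_of_isBigO_rpow_exp ha (hf.locallyIntegrableOn_remainder J) htop
    (hf.remainder_isBigO_nhdsGT J) hs).differentiableWithinAt

lemma mellin_remainder_succ (hf : IsAdmissible f l A) {J : ℕ} {s : ℂ} (hs : l - J < s.re) :
    mellin (remainder f l A (J + 1)) s
      = mellin (remainder f l A J) s - A J / (s - ((l : ℂ) - J)) := by
  have hpow := hasMellin_cpow_Ioc ((-l + J : ℝ) : ℂ) (s := s) (by simp; linarith)
  rw [remainder_succ, (hasMellin_sub (hf.mellinConvergent_remainder hs)
    (hpow.1.const_smul (A J))).2, mellin_const_smul, hpow.2]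
  push_cast
  ring_nf

lemma truncatedZeta_succ (hf : IsAdmissible f l A) {J : ℕ} {s : ℂ} (hs : l - J < s.re) :
    truncatedZeta f l A (J + 1) s = truncatedZeta f l A J s := by
  have hpole : s - ((l : ℂ) - J) ≠ 0 := fun h => by
    simpa [hs.ne'] using congrArg Complex.re (sub_eq_zero.mp h)
  rw [truncatedZeta, truncatedZeta, hf.mellin_remainder_succ hs, Finset.sum_range_succ]
  field_simp
  ring

lemma truncatedZeta_eq_of_le (hf : IsAdmissible f l A) {J J' : ℕ} (hJ : J ≤ J') {s : ℂ}
    (hs : l - J < s.re) : truncatedZeta f l A J' s = truncatedZeta f l A J s := by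
  induction J', hJ using Nat.le_induction with
  | base => rfl
  | succ K hJK ih =>
    rw [hf.truncatedZeta_succ (by linarith [(Nat.cast_le (α := ℝ)).mpr hJK]), ih]

lemma regularizedZeta_eq_truncatedZeta (hf : IsAdmissible f l A) {J : ℕ} {s : ℂ}
    (hs : l - J < s.re) : regularizedZeta f l A s = truncatedZeta f l A J s := by
  have hN : l - (⌊l - s.re⌋₊ + 1 : ℕ) < s.re := by
    push_cast
    linarith [Nat.lt_floor_add_one (l - s.re)]
  rcases le_total J (⌊l - s.re⌋₊ + 1) with hJ | hJ
  · exact hf.truncatedZeta_eq_of_le hJ hs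
  · exact (hf.truncatedZeta_eq_of_le hJ hN).symm

lemma regularizedZeta_eventuallyEq (hf : IsAdmissible f l A) {J : ℕ} {s : ℂ}
    (hs : l - J < s.re) : regularizedZeta f l A =ᶠ[𝓝 s] truncatedZeta f l A J :=
  ((isOpen_lt continuous_const Complex.continuous_re).eventually_mem hs).mono
    fun _ => hf.regularizedZeta_eq_truncatedZeta

lemma meromorphicAt_regularizedZeta (hf : IsAdmissible f l A) (s : ℂ) :
    MeromorphicAt (regularizedZeta f l A) s := by
  obtain ⟨J, hJ⟩ := exists_nat_gt (l - s.re)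
  have hs : l - J < s.re := by linarith
  have hM := (hf.analyticAt_mellin_remainder hs).meromorphicAt
  have hΓ := (analyticAt_inv_Gamma_add_one s).meromorphicAt
  refine MeromorphicAt.congr ?_
    ((hf.regularizedZeta_eventuallyEq hs).symm.filter_mono nhdsWithin_le_nhds)
  unfold truncatedZeta
  fun_prop

lemma regularizedZeta_eq_mellin (hf : IsAdmissible f l A) {s : ℂ} (hs : l < s.re) :
    regularizedZeta f l A s = -((Complex.Gamma s)⁻¹ * mellin f s) := by
  rw [hf.regularizedZeta_eq_truncatedZeta (J := 0) (by simpa using hs), truncatedZeta,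
    remainder_zero, Complex.one_div_Gamma_eq_self_mul_one_div_Gamma_add_one s]
  simp only [Finset.range_zero, Finset.sum_empty, add_zero]
  ring

lemma truncatedZeta_one_eq : truncatedZeta f l A 1 = fun s => -((Complex.Gamma (s + 1))⁻¹
    * (s * mellin (remainder f l A 1) s + A 0 * (1 + l / (s - l)))) := by
  ext s
  simp [truncatedZeta]

lemma analyticAt_truncatedZeta_one (hf : IsAdmissible f l A) (hl : l < 1) :
    AnalyticAt ℂ (truncatedZeta f l A 1) 0 := by
  have hM := hf.analyticAt_mellin_remainder (J := 1) (s := 0) (by simpa using hl)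
  have hΓ := analyticAt_inv_Gamma_add_one 0
  have hc := analyticAt_div_sub_self_zero (l : ℂ)
  rw [truncatedZeta_one_eq]
  fun_prop

lemma hasDerivAt_truncatedZeta_one (hf : IsAdmissible f l A) (hl : l < 1) :
    HasDerivAt (truncatedZeta f l A 1)
      (-mellin (remainder f l A 1) 0 + if l = 0 then -(A 0 * γ) else A 0 / l) 0 := by
  have hM := (hf.analyticAt_mellin_remainder (J := 1) (s := 0)
    (by simpa using hl)).differentiableAt.hasDerivAt
  have hZ := (hasDerivAt_inv_Gamma_add_one_zero.fun_mul (((hasDerivAt_id' 0).fun_mul hM).fun_add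
    (((hasDerivAt_div_sub_self_zero (l : ℂ)).const_add 1).const_mul (A 0)))).fun_neg
  rw [truncatedZeta_one_eq]
  refine hZ.congr_deriv ?_
  rcases eq_or_ne l 0 with rfl | hl0
  · simp [mul_comm]
  · have hl0' : (l : ℂ) ≠ 0 := by exact_mod_cast hl0
    simp [hl0, hl0']
    ring

lemma analyticAt_regularizedZeta_zero (hf : IsAdmissible f l A) (hl : l < 1) :
    AnalyticAt ℂ (regularizedZeta f l A) 0 :=
  (hf.analyticAt_truncatedZeta_one hl).congr
    (hf.regularizedZeta_eventuallyEq (by simpa using hl)).symm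

lemma hasDerivAt_regularizedZeta_zero (hf : IsAdmissible f l A) (hl : l < 1) :
    HasDerivAt (regularizedZeta f l A)
      (-mellin (remainder f l A 1) 0 + if l = 0 then -(A 0 * γ) else A 0 / l) 0 :=
  (hf.hasDerivAt_truncatedZeta_one hl).congr_of_eventuallyEq
    (hf.regularizedZeta_eventuallyEq (by simpa using hl))

lemma mellin_remainder_one_zero (hf : IsAdmissible f l A) (hl : l < 1) :
    mellin (remainder f l A 1) 0
      = (∫ t in Ioc (0 : ℝ) 1, (f t - A 0 * ((t ^ (-l) : ℝ) : ℂ)) / (t : ℂ))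
        + ∫ t in Ioi (1 : ℝ), f t / (t : ℂ) := by
  have hconv := hf.mellinConvergent_remainder (J := 1) (s := 0) (by simpa using hl)
  rw [mellin, ← Ioc_union_Ioi_eq_Ioi zero_le_one, setIntegral_union (Ioc_disjoint_Ioi le_rfl)
    measurableSet_Ioi (hconv.mono_set Ioc_subset_Ioi_self)
    (hconv.mono_set (Ioi_subset_Ioi zero_le_one))]
  congr 1
  · refine setIntegral_congr_fun measurableSet_Ioc fun t ht => ?_
    simp [Complex.cpow_neg_one, inv_mul_eq_div, remainder, expansionSum, indicator_of_mem ht]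
  · refine setIntegral_congr_fun measurableSet_Ioi fun t ht => ?_
    simp [Complex.cpow_neg_one, inv_mul_eq_div, remainder,
      indicator_of_notMem (fun h : t ∈ Ioc 0 1 => h.2.not_gt ht)]

end IsAdmissible

end

end MellinZeta

/-- Let `f : (0,∞) → ℂ` be continuous with asymptotic expansion
`f(t) ~ Σ_{j≥0} A_{−l+j} t^{−l+j}` as `t → 0⁺` (`l ∈ {0, 1/2}`) and exponential decay
at `∞`.  Then `ζ(s) = −(1/Γ(s)) ∫₀^∞ t^{s−1} f(t) dt` extends meromorphically with
`s = 0` regular, and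
`ζ'(0) = −∫₀¹ (f(t) − A₋ₗ t^{−l}) dt/t − ∫₁^∞ f(t) dt/t + C'`,
where `C' = A₀ Γ'(1)` if `l = 0` and `C' = 2 A₋₁⁄₂` if `l = 1/2`. -/
theorem mellin_zeta_regular_at_zero'
    (f : ℝ → ℂ) (l : ℝ) (hl : l = 0 ∨ l = 1 / 2)
    (hcont : ContinuousOn f (Set.Ioi 0))
    (A : ℕ → ℂ)
    (hasym : ∀ J : ℕ,
      (fun t : ℝ => f t - ∑ j ∈ Finset.range J, A j * ((t ^ (-l + j) : ℝ) : ℂ))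
        =O[nhdsWithin 0 (Set.Ioi 0)] fun t : ℝ => t ^ (-l + J))
    (hdecay : ∃ C a : ℝ, 0 < a ∧ ∀ t : ℝ, 1 ≤ t → ‖f t‖ ≤ C * Real.exp (-a * t)) :
    ∃ ζ : ℂ → ℂ,
      (∀ s, MeromorphicAt ζ s) ∧
      AnalyticAt ℂ ζ 0 ∧
      (∀ s : ℂ, l < s.re →
        ζ s = -((Complex.Gamma s)⁻¹ * ∫ t in Set.Ioi (0 : ℝ), (t : ℂ) ^ (s - 1) * f t)) ∧
      deriv ζ 0
        = -(∫ t in Set.Ioc (0 : ℝ) 1, (f t - A 0 * ((t ^ (-l) : ℝ) : ℂ)) / (t : ℂ))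
          - (∫ t in Set.Ioi (1 : ℝ), f t / (t : ℂ))
          + (if l = 0 then A 0 * ((deriv Real.Gamma 1 : ℝ) : ℂ) else 2 * A 0) := by
  obtain ⟨C, a, ha, hC⟩ := hdecay
  have hf : MellinZeta.IsAdmissible f l A :=
    { locallyIntegrableOn := hcont.locallyIntegrableOn measurableSet_Ioi
      exists_isBigO_exp := ⟨a, ha, .of_bound C <| (eventually_ge_atTop 1).mono fun t ht => by
        simpa [abs_of_pos (Real.exp_pos _)] using hC t ht⟩
      isBigO_expansion := hasym }
  have hl1 : l < 1 := by rcases hl with rfl | rfl <;> norm_num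
  refine ⟨MellinZeta.regularizedZeta f l A, hf.meromorphicAt_regularizedZeta,
    hf.analyticAt_regularizedZeta_zero hl1, fun s hs => ?_, ?_⟩
  · simp [hf.regularizedZeta_eq_mellin hs, mellin]
  · rw [(hf.hasDerivAt_regularizedZeta_zero hl1).deriv, hf.mellin_remainder_one_zero hl1,
      Real.hasDerivAt_Gamma_one.deriv]
    rcases hl with rfl | rfl <;> norm_num <;> ring
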